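/- arXiv:2504.02549 — 2 statements merged into one kernel-verified Lean document; each statement's English description precedes it below -/
import Mathlib

section
/- For all integers m, n ≥ 0: the coface maps satisfy d_i^{m,n+1} ∘ d_j^{m,n} = d_{j+1}^{m,n+1} ∘ d_i^{m,n} for all 0 ≤ i ≤ j ≤ m+n+1, and consequently d^{m,n+1} ∘ d^{m,n} = 0 as a ℚ-linear map dk_{m,n} → dk_{m,n+2}. -/
noncomputable section

open scoped TensorProduct

attribute [local instance 100] LieRing.ofAssociativeRing

/-- The free unital associative algebra over `ℚ` on `N` generators. -/
abbrev Ass (N : ℕ) : Type := FreeAlgebra ℚ (Fin N)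

/-- The `i`-th generator `x_i`. -/
def gen {N : ℕ} (i : Fin N) : Ass N := FreeAlgebra.ι ℚ i

/-- The monomial (word) associated to a list of generator indices. -/
def wordProd {N : ℕ} (l : List (Fin N)) : Ass N := (l.map gen).prod

/-- Extend a function on words (monomials) to a `ℚ`-linear map on the free algebra,
using the monomial basis. -/
def liftWord {N : ℕ} {A : Type} [AddCommGroup A] [Module ℚ A]
    (f : List (Fin N) → A) : Ass N →ₗ[ℚ] A :=
  (FreeAlgebra.basisFreeMonoid ℚ (Fin N)).constr ℚ fun w => f w.toList

/-- `μ_gr` on a word. -/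
def muWord {N : ℕ} : List (Fin N) → Ass N
  | [] => 0
  | [_] => 0
  | a :: b :: t => (if a = b then -(wordProd (a :: t)) else 0) + gen a * muWord (b :: t)

/-- The linearized self-intersection operation `μ_gr`. -/
def muGr (N : ℕ) : Ass N →ₗ[ℚ] Ass N := liftWord muWord

/-- The antipode: the anti-automorphism `ι` with `ι(x_i) = -x_i`, as a linear map. -/
def iotaMap (N : ℕ) : Ass N →ₗ[ℚ] Ass N :=
  liftWord fun l => ((-1 : ℚ) ^ l.length) • wordProd l.reverse

/-- The (right) partial derivative `∂_i`, characterized on `lie_N` by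
`a = Σ_i (∂_i a) x_i`. -/
def partialD {N : ℕ} (i : Fin N) : Ass N →ₗ[ℚ] Ass N :=
  liftWord fun l =>
    match l.getLast? with
    | some a => if a = i then wordProd l.dropLast else 0
    | none => 0

/-- `η_gr` on a pair of words. -/
def etaWord {N : ℕ} (l r : List (Fin N)) : Ass N :=
  match l.getLast?, r with
  | some a, b :: t => if a = b then -(wordProd (l.dropLast ++ a :: t)) else 0
  | _, _ => 0

/-- The linearized homotopy intersection form `η_gr`. -/
def etaGr (N : ℕ) : Ass N →ₗ[ℚ] Ass N →ₗ[ℚ] Ass N :=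
  liftWord fun l => liftWord fun r => etaWord l r

/-- Degree-`k` homogeneous part of a free algebra (word-length grading). -/
def homogS (X : Type) (k : ℕ) : Submodule ℚ (FreeAlgebra ℚ X) :=
  Submodule.span ℚ {z | ∃ l : List X, l.length = k ∧ z = (l.map (FreeAlgebra.ι ℚ)).prod}

/-- The projection onto the degree-`k` homogeneous component. -/
def homogComp {N : ℕ} (k : ℕ) : Ass N →ₗ[ℚ] Ass N :=
  liftWord fun l => if l.length = k then wordProd l else 0

/-- The free Lie algebra on `x_1, …, x_N`, as the Lie subalgebra of `Ass N`
(with the commutator bracket) generated by the generators. -/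
def lieN (N : ℕ) : LieSubalgebra ℚ (Ass N) :=
  LieSubalgebra.lieSpan ℚ (Ass N) (Set.range (gen (N := N)))

/-- The generator `x_i` as an element of `lie_N`. -/
def genL (N : ℕ) (i : Fin N) : lieN N :=
  ⟨gen i, LieSubalgebra.subset_lieSpan ⟨i, rfl⟩⟩

/-- Substitution: the algebra endomorphism of `ass_2` with `x ↦ p`, `y ↦ q`. -/
def sub2 (p q : Ass 2) : Ass 2 →ₐ[ℚ] Ass 2 := FreeAlgebra.lift ℚ ![p, q]

/-- `x`. -/
def xA : Ass 2 := gen 0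
/-- `y`. -/
def yA : Ass 2 := gen 1

/-- Equation (E1): `φ(y,0) − φ(x+y,0) = 0`. -/
def E1 (φ : Ass 2) : Prop := sub2 yA 0 φ - sub2 (xA + yA) 0 φ = 0

/-- Equation (E2): `(∂_y φ) + (∂_y φ)(y,0) − (∂_y φ)(x+y,0) − R(φ) = 0`,
where `R` is the restriction of `μ_gr` to `lie_2`. -/
def E2 (φ : Ass 2) : Prop :=
  partialD 1 φ + sub2 yA 0 (partialD 1 φ) - sub2 (xA + yA) 0 (partialD 1 φ) - muGr 2 φ = 0

/-- Equation (E3): `[x, φ(y,x)] + [y, φ(x,y)] = 0`. -/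
def E3 (φ : Ass 2) : Prop := ⁅xA, sub2 yA xA φ⁆ + ⁅yA, φ⁆ = 0

/-- `ν^em(φ) = (φ(y,x), φ(x,y))`. -/
def nuEm (φ : Ass 2) : Fin 2 → Ass 2 := ![sub2 yA xA φ, φ]

/-- The space `grt_1^em` of solutions to the linearized emergent equations. -/
def grt1em : Set (Ass 2) := {φ | φ ∈ lieN 2 ∧ E1 φ ∧ E2 φ ∧ E3 φ}

/-- The derivation `ρ(ũ)` on a word. -/
def rhoWord {N : ℕ} (u : Fin N → Ass N) : List (Fin N) → Ass N
  | [] => 0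
  | a :: t => ⁅gen a, u a⁆ * wordProd t + gen a * rhoWord u t

/-- The tangential derivation `ρ(ũ)`, determined by `ρ(ũ)(x_i) = [x_i, u_i]`. -/
def rho {N : ℕ} (u : Fin N → Ass N) : Ass N →ₗ[ℚ] Ass N := liftWord (rhoWord u)

/-- The span of commutators in `ass_N`. -/
def trRel (N : ℕ) : Submodule ℚ (Ass N) :=
  Submodule.span ℚ {z | ∃ a b : Ass N, z = a * b - b * a}

/-- The trace space `tr_N = ass_N/[ass_N, ass_N]`. -/
abbrev Tr (N : ℕ) : Type := Ass N ⧸ trRel N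

/-- The projection `|·| : ass_N → tr_N`. -/
def trM (N : ℕ) : Ass N →ₗ[ℚ] Tr N := (trRel N).mkQ

/-- The divergence `div(ũ) = Σ_i |x_i (∂_i u_i)|`. -/
def divergence {N : ℕ} (u : Fin N → Ass N) : Tr N :=
  ∑ i, trM N (gen i * partialD i (u i))

/-- `ũ ∈ tder_N`: all components lie in `lie_N`. -/
def IsTDer {N : ℕ} (u : Fin N → Ass N) : Prop := ∀ i, u i ∈ lieN N

/-- `ũ ∈ sder_N`. -/
def IsSDer {N : ℕ} (u : Fin N → Ass N) : Prop := IsTDer u ∧ rho u (∑ i, gen i) = 0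

/-- `ũ ∈ krv_N`. -/
def IsKRV {N : ℕ} (u : Fin N → Ass N) : Prop :=
  IsSDer u ∧ ∃ f : Fin (N + 1) → Polynomial ℚ,
    divergence u =
      trM N (Polynomial.aeval (∑ i, gen i) (f 0)) +
        ∑ i : Fin N, trM N (Polynomial.aeval (gen i) (f i.succ))

/-- `ũ ∈ krv_N^0`. -/
def IsKRV0 {N : ℕ} (u : Fin N → Ass N) : Prop :=
  IsSDer u ∧ ∃ cf : Fin N → ℚ, divergence u = ∑ i, cf i • trM N (gen i)

/-- The swap `u(x,y) ↦ u(y,x)`. -/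
def swapA : Ass 2 →ₐ[ℚ] Ass 2 := sub2 yA xA

/-- `ũ ∈ krv_2^sym`. -/
def IsKRVsym (u : Fin 2 → Ass 2) : Prop := IsKRV u ∧ u 1 = swapA (u 0)


/-- The coproduct `Δ` on `ass_N`, with `Δ(x_i) = x_i ⊗ 1 + 1 ⊗ x_i`. -/
def comulA (N : ℕ) : Ass N →ₐ[ℚ] (Ass N ⊗[ℚ] Ass N) :=
  FreeAlgebra.lift ℚ fun i => gen i ⊗ₜ[ℚ] (1 : Ass N) + (1 : Ass N) ⊗ₜ[ℚ] gen i

/-- `μ_{r,gr} = ((|·|∘mult) ⊗ id) ∘ (id ⊗ ((ι ⊗ id) ∘ Δ)) ∘ (id ⊗ μ_gr) ∘ Δ`. -/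
def muR (N : ℕ) : Ass N →ₗ[ℚ] Tr N ⊗[ℚ] Ass N :=
  (TensorProduct.map ((trM N).comp (LinearMap.mul' ℚ (Ass N))) LinearMap.id).comp <|
    ((TensorProduct.assoc ℚ (Ass N) (Ass N) (Ass N)).symm.toLinearMap).comp <|
      (TensorProduct.map LinearMap.id
          ((TensorProduct.map (iotaMap N) LinearMap.id).comp (comulA N).toLinearMap)).comp <|
        (TensorProduct.map LinearMap.id (muGr N)).comp (comulA N).toLinearMap

/-- `Alt(a ⊗ b) = a ⊗ b - b ⊗ a`. -/
def altMap (N : ℕ) : Tr N ⊗[ℚ] Tr N →ₗ[ℚ] Tr N ⊗[ℚ] Tr N :=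
  LinearMap.id - (TensorProduct.comm ℚ (Tr N) (Tr N)).toLinearMap

/-- The linearized Turaev cobracket `δ_gr = Alt ∘ (id ⊗ |·|) ∘ μ_{r,gr}`. -/
def Dgr (N : ℕ) : Ass N →ₗ[ℚ] Tr N ⊗[ℚ] Tr N :=
  (altMap N).comp ((TensorProduct.map LinearMap.id (trM N)).comp (muR N))

/-- Index type of the generators `t_{pq}` (`p ≠ q`) of the Drinfeld–Kohno Lie algebra. -/
def dkGenIdx (N : ℕ) : Type := {pq : Fin N × Fin N // pq.1 ≠ pq.2}

abbrev FLdk (N : ℕ) := FreeLieAlgebra ℚ (dkGenIdx N)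

def tFree {N : ℕ} (p q : Fin N) (h : p ≠ q) : FLdk N := FreeLieAlgebra.of ℚ ⟨(p, q), h⟩

/-- The defining relations of `dk_N`: symmetry, commutation and 4T. -/
def dkRels (N : ℕ) : Set (FLdk N) :=
  {z | ∃ (p q : Fin N) (h : p ≠ q), z = tFree p q h - tFree q p h.symm} ∪
  {z | ∃ (p q r s : Fin N) (hpq : p ≠ q) (hrs : r ≠ s),
      p ≠ r ∧ p ≠ s ∧ q ≠ r ∧ q ≠ s ∧ z = ⁅tFree p q hpq, tFree r s hrs⁆} ∪
  {z | ∃ (p q r : Fin N) (hpq : p ≠ q) (hqr : q ≠ r) (hpr : p ≠ r),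
      z = ⁅tFree p q hpq + tFree q r hqr, tFree p r hpr⁆}

def dkIdeal (N : ℕ) : LieIdeal ℚ (FLdk N) := LieSubmodule.lieSpan ℚ (FLdk N) (dkRels N)

/-- The Drinfeld–Kohno Lie algebra `dk_N`. -/
abbrev dk (N : ℕ) := FLdk N ⧸ dkIdeal N

/-- The generator `t_{pq}` of `dk_N`. -/
def tGen {N : ℕ} (p q : Fin N) (h : p ≠ q) : dk N :=
  LieSubmodule.Quotient.mk (N := dkIdeal N) (tFree p q h)

/-- Index type of the generators of the mixed Drinfeld–Kohno Lie algebra `dk_{m,n}`: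
pairs of distinct indices in `Fin (m+n)`, not both poles (i.e., not both `< m`). -/
def MIdx (m n : ℕ) : Type :=
  {pq : Fin (m + n) × Fin (m + n) // pq.1 ≠ pq.2 ∧ (m ≤ (pq.1 : ℕ) ∨ m ≤ (pq.2 : ℕ))}

abbrev FLmix (m n : ℕ) := FreeLieAlgebra ℚ (MIdx m n)

def tMix {m n : ℕ} (p q : Fin (m + n)) (h : p ≠ q)
    (hm : m ≤ (p : ℕ) ∨ m ≤ (q : ℕ)) : FLmix m n :=
  FreeLieAlgebra.of ℚ ⟨(p, q), h, hm⟩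

/-- The defining relations of `dk_{m,n}`: exactly the symmetry, commutation and 4T relations
of `dk_{m+n}` involving only mixed pairs. -/
def mixRels (m n : ℕ) : Set (FLmix m n) :=
  {z | ∃ (p q : Fin (m + n)) (h : p ≠ q) (hm : m ≤ (p : ℕ) ∨ m ≤ (q : ℕ)),
      z = tMix p q h hm - tMix q p h.symm hm.symm} ∪
  {z | ∃ (p q r s : Fin (m + n)) (hpq : p ≠ q) (hmpq : m ≤ (p : ℕ) ∨ m ≤ (q : ℕ))
      (hrs : r ≠ s) (hmrs : m ≤ (r : ℕ) ∨ m ≤ (s : ℕ)),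
      p ≠ r ∧ p ≠ s ∧ q ≠ r ∧ q ≠ s ∧ z = ⁅tMix p q hpq hmpq, tMix r s hrs hmrs⁆} ∪
  {z | ∃ (p q r : Fin (m + n)) (hpq : p ≠ q) (hmpq : m ≤ (p : ℕ) ∨ m ≤ (q : ℕ))
      (hqr : q ≠ r) (hmqr : m ≤ (q : ℕ) ∨ m ≤ (r : ℕ))
      (hpr : p ≠ r) (hmpr : m ≤ (p : ℕ) ∨ m ≤ (r : ℕ)),
      z = ⁅tMix p q hpq hmpq + tMix q r hqr hmqr, tMix p r hpr hmpr⁆}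

def mixIdeal (m n : ℕ) : LieIdeal ℚ (FLmix m n) :=
  LieSubmodule.lieSpan ℚ (FLmix m n) (mixRels m n)

/-- The mixed Drinfeld–Kohno Lie algebra `dk_{m,n}`. -/
abbrev dkmn (m n : ℕ) := FLmix m n ⧸ mixIdeal m n

lemma castAdd_ne_natAdd {m n : ℕ} (i : Fin m) (j : Fin n) :
    Fin.castAdd n i ≠ Fin.natAdd m j := by
  intro h
  have hv := congrArg Fin.val h
  simp only [Fin.coe_castAdd, Fin.coe_natAdd] at hv
  have := i.isLt
  omega

lemma natAdd_ne {m n : ℕ} {u v : Fin n} (h : u ≠ v) :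
    Fin.natAdd m u ≠ Fin.natAdd m v := by
  intro hh
  exact h (by
    have hv := congrArg Fin.val hh
    simp only [Fin.coe_natAdd] at hv
    exact Fin.ext (by omega))

lemma natAdd_le_left (m : ℕ) {n : ℕ} (j : Fin n) : m ≤ (Fin.natAdd m j : ℕ) := by
  simp only [Fin.coe_natAdd]; omega

/-- The generator `a_{ij}` of `dk_{m,n}` (0-indexed): `a_{ij} = t_{i(m+j)}`. -/
def aG {m n : ℕ} (i : Fin m) (j : Fin n) : dkmn m n :=
  LieSubmodule.Quotient.mk (N := mixIdeal m n)
    (tMix (Fin.castAdd n i) (Fin.natAdd m j) (castAdd_ne_natAdd i j)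
      (Or.inr (natAdd_le_left m j)))

/-- The generator `c_{ij}` of `dk_{m,n}` (0-indexed): `c_{ij} = t_{(m+i)(m+j)}`. -/
def cG {m n : ℕ} (u v : Fin n) (h : u ≠ v) : dkmn m n :=
  LieSubmodule.Quotient.mk (N := mixIdeal m n)
    (tMix (Fin.natAdd m u) (Fin.natAdd m v) (natAdd_ne h)
      (Or.inl (natAdd_le_left m u)))

/-- The Lie ideal `c` of `dk_{m,n}` generated by the `c_{ij}`. -/
def cId (m n : ℕ) : LieIdeal ℚ (dkmn m n) :=
  LieSubmodule.lieSpan ℚ (dkmn m n) {z | ∃ (u v : Fin n) (h : u ≠ v), z = cG u v h}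

/-- The Lie ideal `[c,c]`. -/
def ccId (m n : ℕ) : LieIdeal ℚ (dkmn m n) := ⁅cId m n, cId m n⁆

/-- The emergent Drinfeld–Kohno Lie algebra `edk_{m,n} = dk_{m,n}/[c,c]`. -/
abbrev edk (m n : ℕ) := dkmn m n ⧸ ccId m n

/-- Projection `dk_{m,n} → edk_{m,n}` as a function. -/
def eprojF (m n : ℕ) : dkmn m n → edk m n := LieSubmodule.Quotient.mk (N := ccId m n)

/-- Projection `dk_{m,n} → edk_{m,n}` as a `ℚ`-linear map. -/
def eproj (m n : ℕ) : dkmn m n →ₗ[ℚ] edk m n := (ccId m n).toSubmodule.mkQ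

/-- `a_{ij}` in `edk_{m,n}`. -/
def aGE {m n : ℕ} (i : Fin m) (j : Fin n) : edk m n := eprojF m n (aG i j)

/-- `c_{ij}` in `edk_{m,n}`. -/
def cGE {m n : ℕ} (u v : Fin n) (h : u ≠ v) : edk m n := eprojF m n (cG u v h)

/-- The canonical Lie algebra map `FreeLieAlgebra ℚ (Fin m) → ass_m`,
whose image is `lie_m`. -/
def toAssL (m : ℕ) : FreeLieAlgebra ℚ (Fin m) →ₗ⁅ℚ⁆ FreeAlgebra ℚ (Fin m) :=
  FreeLieAlgebra.lift ℚ (FreeAlgebra.ι ℚ)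

/-- `u ↦ u_i` (at `dk` level): the Lie algebra map with `x_p ↦ a_{pi}`. -/
def uEldk {m n : ℕ} (i : Fin n) : FreeLieAlgebra ℚ (Fin m) →ₗ⁅ℚ⁆ dkmn m n :=
  FreeLieAlgebra.lift ℚ fun p => aG p i

/-- `u ↦ u_i`: the Lie algebra map `lie_m → edk_{m,n}` with `x_p ↦ a_{pi}`. -/
def uEl {m n : ℕ} (i : Fin n) : FreeLieAlgebra ℚ (Fin m) →ₗ⁅ℚ⁆ edk m n :=
  FreeLieAlgebra.lift ℚ fun p => aGE p i

/-- Iterated bracketing `[a_{p₁ j}, [a_{p₂ j}, [… , [a_{p_d j}, ξ]…]]]`. -/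
def adWApply {m n : ℕ} (j : Fin n) : List (Fin m) → edk m n → edk m n
  | [], ξ => ξ
  | p :: t, ξ => ⁅aGE p j, adWApply j t ξ⁆


/-- `w ↦ w_{uv}`: the linear map `ass_m → edk_{m,n}` with
`1 ↦ c_{uv}` and `(x_{p₁}⋯x_{p_d}) ↦ [a_{p₁ v}, [… [a_{p_d v}, c_{uv}]…]]`. -/
def wEl {m n : ℕ} (u v : Fin n) (h : u ≠ v) : Ass m →ₗ[ℚ] edk m n :=
  liftWord fun l => adWApply v l (cGE u v h)

/-- `ad_w^{(l)}(ξ)`, linear in `w`. -/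
def adOp {m n : ℕ} (l : Fin n) (ξ : edk m n) : Ass m →ₗ[ℚ] edk m n :=
  liftWord fun lst => adWApply l lst ξ

/-- Degree-`k` part of the free Lie algebra (generators of degree 1), realized as the
preimage of the degree-`k` part of the free associative algebra under the canonical map. -/
def flHomog (X : Type) (k : ℕ) : Submodule ℚ (FreeLieAlgebra ℚ X) :=
  Submodule.comap
    (FreeLieAlgebra.lift ℚ (FreeAlgebra.ι ℚ (X := X)) :
      FreeLieAlgebra ℚ X →ₗ⁅ℚ⁆ FreeAlgebra ℚ X).toLinearMap
    (homogS X k)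

/-- Degree-`k` part of `edk_{m,n}`. -/
def edkHomog (m n : ℕ) (k : ℕ) : Submodule ℚ (edk m n) :=
  (((flHomog (MIdx m n) k).map (mixIdeal m n).toSubmodule.mkQ)).map (eproj m n)

-- Fin helper lemmas
lemma castSucc_ne_of_ne {n : ℕ} {u v : Fin n} (h : u ≠ v) :
    Fin.castSucc u ≠ Fin.castSucc v := fun hh => h (Fin.castSucc_injective n hh)

lemma succ_ne_of_ne {n : ℕ} {u v : Fin n} (h : u ≠ v) :
    Fin.succ u ≠ Fin.succ v := fun hh => h (Fin.succ_injective n hh)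

lemma castSucc_ne_last {n : ℕ} (u : Fin n) : Fin.castSucc u ≠ Fin.last n :=
  (Fin.castSucc_lt_last u).ne

lemma castSucc_ne_succ_of_le {n : ℕ} {u v : Fin n} (h : u ≤ v) :
    Fin.castSucc u ≠ Fin.succ v := by
  intro hh
  have hv := congrArg Fin.val hh
  simp only [Fin.coe_castSucc, Fin.val_succ] at hv
  have := Fin.le_def.mp h
  omega

/-- `D` is the pole coface map `δ_k : dk_{m,n} → dk_{m+1,n}`, `0 ≤ k ≤ m`
(1-indexed `k`; `k = 0` is extension on the left). -/
def IsDeltaPole (m n : ℕ) (k : ℕ) (D : dkmn m n →ₗ⁅ℚ⁆ dkmn (m + 1) n) : Prop :=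
  (∀ (i : Fin m) (j : Fin n),
     (((i : ℕ) + 1 < k) → D (aG i j) = aG (Fin.castSucc i) j) ∧
     (((i : ℕ) + 1 = k) → D (aG i j) = aG (Fin.castSucc i) j + aG (Fin.succ i) j) ∧
     ((k < (i : ℕ) + 1) → D (aG i j) = aG (Fin.succ i) j)) ∧
  (∀ (u v : Fin n) (h : u ≠ v), D (cG u v h) = cG u v h)

/-- `D` is the strand coface map `δ_{m+κ} : dk_{m,n} → dk_{m,n+1}`, `1 ≤ κ ≤ n+1`
(1-indexed strand `κ`; `κ = n+1` is extension on the right). -/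
def IsDeltaStrand (m n : ℕ) (κ : ℕ) (D : dkmn m n →ₗ⁅ℚ⁆ dkmn m (n + 1)) : Prop :=
  (∀ (i : Fin m) (j : Fin n),
     (((j : ℕ) + 1 < κ) → D (aG i j) = aG i (Fin.castSucc j)) ∧
     (((j : ℕ) + 1 = κ) → D (aG i j) = aG i (Fin.castSucc j) + aG i (Fin.succ j)) ∧
     ((κ < (j : ℕ) + 1) → D (aG i j) = aG i (Fin.succ j))) ∧
  (∀ (u v : Fin n) (h : u < v),
     (((v : ℕ) + 1 < κ) →
        D (cG u v h.ne) = cG (Fin.castSucc u) (Fin.castSucc v) (castSucc_ne_of_ne h.ne)) ∧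
     (((v : ℕ) + 1 = κ) →
        D (cG u v h.ne) = cG (Fin.castSucc u) (Fin.castSucc v) (castSucc_ne_of_ne h.ne)
          + cG (Fin.castSucc u) (Fin.succ v) (castSucc_ne_succ_of_le h.le)) ∧
     (((u : ℕ) + 1 < κ ∧ κ < (v : ℕ) + 1) →
        D (cG u v h.ne) = cG (Fin.castSucc u) (Fin.succ v) (castSucc_ne_succ_of_le h.le)) ∧
     (((u : ℕ) + 1 = κ) →
        D (cG u v h.ne) = cG (Fin.castSucc u) (Fin.succ v) (castSucc_ne_succ_of_le h.le)
          + cG (Fin.succ u) (Fin.succ v) (succ_ne_of_ne h.ne)) ∧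
     ((κ < (u : ℕ) + 1) →
        D (cG u v h.ne) = cG (Fin.succ u) (Fin.succ v) (succ_ne_of_ne h.ne)))

/-- `T` is `ϑ_{m+1} : dk_{m+1,n} → dk_{m,n+1}` (the last pole becomes the first strand). -/
def IsTheta (m n : ℕ) (T : dkmn (m + 1) n →ₗ⁅ℚ⁆ dkmn m (n + 1)) : Prop :=
  (∀ (i : Fin (m + 1)) (j : Fin n),
     (∀ hi : (i : ℕ) < m, T (aG i j) = aG ⟨i, hi⟩ (Fin.succ j)) ∧
     ((i : ℕ) = m → T (aG i j) = cG 0 (Fin.succ j) (Fin.succ_ne_zero j).symm)) ∧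
  (∀ (u v : Fin n) (h : u ≠ v), T (cG u v h) = cG (Fin.succ u) (Fin.succ v) (succ_ne_of_ne h))

/-- The coface map `d_k : dk_{m,n} → dk_{m,n+1}`, built from the data of the pole
cofaces, the strand cofaces, and `ϑ_{m+1}`. -/
def coface (m n : ℕ) (Dp : ℕ → (dkmn m n →ₗ⁅ℚ⁆ dkmn (m + 1) n))
    (Ds : ℕ → (dkmn m n →ₗ⁅ℚ⁆ dkmn m (n + 1)))
    (T : dkmn (m + 1) n →ₗ⁅ℚ⁆ dkmn m (n + 1)) (k : ℕ) :
    dkmn m n →ₗ⁅ℚ⁆ dkmn m (n + 1) :=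
  if k ≤ m then T.comp (Dp k) else Ds (k - m)

/-- The algebra map `ass_{m'+1} → ass_{m'}` with `x_p ↦ x_p` (`p < m'`) and `x_{m'} ↦ 0`. -/
def setLast0A (m' : ℕ) : Ass (m' + 1) →ₐ[ℚ] Ass m' :=
  FreeAlgebra.lift ℚ fun p : Fin (m' + 1) =>
    if h : (p : ℕ) < m' then gen ⟨p, h⟩ else 0

/-- The Lie algebra map `FreeLie (Fin (m'+1)) → FreeLie (Fin m')` setting the last
generator to `0`. -/
def flSetLast0 (m' : ℕ) : FreeLieAlgebra ℚ (Fin (m' + 1)) →ₗ⁅ℚ⁆ FreeLieAlgebra ℚ (Fin m') :=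
  FreeLieAlgebra.lift ℚ fun p : Fin (m' + 1) =>
    if h : (p : ℕ) < m' then FreeLieAlgebra.of ℚ ⟨p, h⟩ else 0

/-!
Number the points of `dk_{m,n}` by positions `0, …, m + n - 1`, poles first. In these
coordinates `ϑ_{m+1}` is the identity, and every coface map `d_k` sends `t_{pq}` to the sum of
`t_{p'q'}` over `p' ∈ D_k(p)`, `q' ∈ D_k(q)`, where `D_k(p)` is `{p}`, `{p, p + 1}` or `{p + 1}`
according as `p + 1 < k`, `p + 1 = k` or `p + 1 > k`. The sets `D_k(p)` are disjoint for distinct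
`p`, so composites of coface maps are computed by composing the `D_k`, and
`D_i ∘ D_j = D_{j+1} ∘ D_i` for `i ≤ j` is elementary arithmetic. The vanishing of `d ∘ d` is
the usual consequence of the cosimplicial identities: the term `(i, j)` with `i ≤ j` cancels the
term `(j + 1, i)`.
-/

open Finset in
theorem sum_range_sum_range_alternating_eq_zero {R M : Type*} [Ring R] [AddCommGroup M]
    [Module R M] (s : ℕ) (φ : ℕ → ℕ → M) (h : ∀ i j, i ≤ j → j ≤ s → φ i j = φ (j + 1) i) :
    ∑ j ∈ range (s + 1), ∑ i ∈ range (s + 2), (-1 : R) ^ (j + i) • φ i j = 0 := by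
  rw [← sum_product', ← sum_filter_add_sum_filter_not _ fun x : ℕ × ℕ => x.2 ≤ x.1,
    add_eq_zero_iff_eq_neg, ← sum_neg_distrib]
  refine sum_nbij' (fun x => (x.2, x.1 + 1)) (fun x => (x.2 - 1, x.1)) ?_ ?_ ?_ ?_ ?_
  all_goals rintro ⟨j, i⟩ hx
  all_goals simp only [mem_filter, mem_product, mem_range] at hx
  · simp only [mem_filter, mem_product, mem_range]
    omega
  · simp only [mem_filter, mem_product, mem_range]
    omega
  · simp
  · simp only [Prod.mk.injEq, true_and]
    omega
  · rw [h i j hx.2 (by omega), show i + (j + 1) = j + i + 1 by ring, pow_succ, mul_neg_one,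
      neg_smul, neg_neg]

theorem LinearMap.alternating_sum_comp_alternating_sum_eq_zero {R M N P : Type*} [CommRing R]
    [AddCommGroup M] [AddCommGroup N] [AddCommGroup P] [Module R M] [Module R N] [Module R P]
    (s : ℕ) (f : ℕ → M →ₗ[R] N) (g : ℕ → N →ₗ[R] P)
    (h : ∀ i j, i ≤ j → j ≤ s → g i ∘ₗ f j = g (j + 1) ∘ₗ f i) :
    (∑ k ∈ Finset.range (s + 2), (-1 : R) ^ k • g k) ∘ₗ
      (∑ k ∈ Finset.range (s + 1), (-1 : R) ^ k • f k) = 0 := by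
  ext x
  simp only [LinearMap.comp_apply, LinearMap.coe_sum, Finset.sum_apply, LinearMap.smul_apply,
    map_sum, map_smul, Finset.smul_sum, smul_smul, ← pow_add, LinearMap.zero_apply]
  exact sum_range_sum_range_alternating_eq_zero (R := R) s (fun i j => g i (f j x))
    fun i j hij hj => LinearMap.congr_fun (h i j hij hj) x

namespace DKCoface

open Finset

/-- Pairs of positions in `Fin (m + n)` (poles first, then strands) indexing a generator
of `dk_{m,n}`. -/
def IsGenPair (m n p q : ℕ) : Prop := p < m + n ∧ q < m + n ∧ p ≠ q ∧ (m ≤ p ∨ m ≤ q)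

lemma IsGenPair.symm {m n p q : ℕ} (h : IsGenPair m n p q) : IsGenPair m n q p :=
  ⟨h.2.1, h.1, h.2.2.1.symm, h.2.2.2.symm⟩

open Classical in
/-- The generator `t_{pq}` of `dk_{m,n}` indexed by natural-number positions, extended by zero
to pairs that do not index a generator. -/
def tPos (m n p q : ℕ) : dkmn m n :=
  if h : IsGenPair m n p q then
    LieSubmodule.Quotient.mk (N := mixIdeal m n)
      (tMix ⟨p, h.1⟩ ⟨q, h.2.1⟩ (fun e => h.2.2.1 (congrArg Fin.val e)) h.2.2.2)
  else 0

variable {m n : ℕ}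

lemma tPos_comm (p q : ℕ) : tPos m n p q = tPos m n q p := by
  by_cases h : IsGenPair m n p q
  · rw [tPos, dif_pos h, tPos, dif_pos h.symm]
    refine (Submodule.Quotient.eq (mixIdeal m n).toSubmodule).mpr ?_
    exact LieSubmodule.subset_lieSpan (Or.inl (Or.inl ⟨_, _, _, _, rfl⟩))
  · rw [tPos, dif_neg h, tPos, dif_neg fun h' => h h'.symm]

lemma aG_eq_tPos (i : Fin m) (j : Fin n) : aG i j = tPos m n i (m + j) := by
  rw [tPos, dif_pos ⟨by omega, by omega, by omega, by omega⟩]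
  rfl

lemma cG_eq_tPos {u v : Fin n} (h : u ≠ v) :
    (cG u v h : dkmn m n) = tPos m n (m + u) (m + v) := by
  rw [tPos, dif_pos ⟨by omega, by omega, by simpa [Fin.val_eq_val] using h, by omega⟩]
  rfl

lemma dkmn_hom_ext {L : Type*} [LieRing L] [LieAlgebra ℚ L] {f g : dkmn m n →ₗ⁅ℚ⁆ L}
    (h : ∀ p q, IsGenPair m n p q → f (tPos m n p q) = g (tPos m n p q)) : f = g := by
  let π : FLmix m n →ₗ⁅ℚ⁆ dkmn m n :=
    { LieSubmodule.Quotient.mk' (mixIdeal m n) with map_lie' := rfl }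
  have hπ : f.comp π = g.comp π := by
    refine FreeLieAlgebra.hom_ext fun ⟨⟨p, q⟩, hpq, hm⟩ => ?_
    have hgen : IsGenPair m n p q := ⟨p.2, q.2, fun e => hpq (Fin.ext e), hm⟩
    have := h p q hgen
    rwa [tPos, dif_pos hgen] at this
  ext z
  obtain ⟨y, rfl⟩ := LieSubmodule.Quotient.surjective_mk' (mixIdeal m n) z
  exact LieHom.congr_fun hπ y

lemma IsGenPair.induction {P : ℕ → ℕ → Prop} (symm : ∀ p q, P p q → P q p)
    (pole_strand : ∀ (i : Fin m) (j : Fin n), P i (m + j))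
    (strand_strand : ∀ u v : Fin n, u < v → P (m + u) (m + v)) :
    ∀ {p q}, IsGenPair m n p q → P p q := by
  suffices key : ∀ {p q}, IsGenPair m n p q → p < q → P p q by
    intro p q h
    rcases lt_or_gt_of_ne h.2.2.1 with hpq | hqp
    · exact key h hpq
    · exact symm _ _ (key h.symm hqp)
  intro p q ⟨hp, hq, _, hm⟩ hpq
  by_cases hpm : p < m
  · simpa [show m + (q - m) = q by omega] using pole_strand ⟨p, hpm⟩ ⟨q - m, by omega⟩
  · simpa [show m + (p - m) = p by omega, show m + (q - m) = q by omega] using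
      strand_strand ⟨p - m, by omega⟩ ⟨q - m, by omega⟩ (Fin.mk_lt_mk.mpr (by omega))

/-- The positions of `dk_{m,n+1}` to which `d_k` sends the position `p` of `dk_{m,n}`;
position `k - 1` is doubled. -/
def cofaceImage (k p : ℕ) : Finset ℕ :=
  ({p, p + 1} : Finset ℕ).filter fun r => (r = p ∧ p < k) ∨ (r = p + 1 ∧ k ≤ p + 1)

lemma mem_cofaceImage {k p r : ℕ} :
    r ∈ cofaceImage k p ↔ (r = p ∧ p < k) ∨ (r = p + 1 ∧ k ≤ p + 1) := by
  simp only [cofaceImage, mem_filter, mem_insert, mem_singleton]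
  omega

lemma cofaceImage_of_lt {k p : ℕ} (h : p + 1 < k) : cofaceImage k p = {p} := by
  ext r; simp only [mem_cofaceImage, mem_singleton]; omega

lemma cofaceImage_of_eq {k p : ℕ} (h : p + 1 = k) : cofaceImage k p = {p, p + 1} := by
  ext r; simp only [mem_cofaceImage, mem_insert, mem_singleton]; omega

lemma cofaceImage_of_le {k p : ℕ} (h : k ≤ p) : cofaceImage k p = {p + 1} := by
  ext r; simp only [mem_cofaceImage, mem_singleton]; omega

def tSum (m n : ℕ) (A B : Finset ℕ) : dkmn m n := ∑ p ∈ A, ∑ q ∈ B, tPos m n p q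

lemma tSum_comm (A B : Finset ℕ) : tSum m n A B = tSum m n B A := by
  rw [tSum, tSum, sum_comm]
  simp only [tPos_comm]

lemma tSum_singleton (a b : ℕ) : tSum m n {a} {b} = tPos m n a b := by
  simp [tSum]

lemma tSum_singleton_pair (a b : ℕ) :
    tSum m n {a} {b, b + 1} = tPos m n a b + tPos m n a (b + 1) := by
  simp [tSum]

lemma tSum_pair_singleton (a b : ℕ) :
    tSum m n {a, a + 1} {b} = tPos m n a b + tPos m n (a + 1) b := by
  simp [tSum]

lemma IsTheta.apply_tPos {T : dkmn (m + 1) n →ₗ⁅ℚ⁆ dkmn m (n + 1)} (hT : IsTheta m n T)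
    {p q : ℕ} (h : IsGenPair (m + 1) n p q) : T (tPos (m + 1) n p q) = tPos m (n + 1) p q := by
  refine h.induction (P := fun p q => T (tPos (m + 1) n p q) = tPos m (n + 1) p q)
    (fun p q hpq => by rw [tPos_comm, hpq, tPos_comm]) (fun i j => ?_) (fun u v huv => ?_)
  · rw [← aG_eq_tPos]
    rcases (Fin.is_le i).lt_or_eq with hi | hi
    · rw [(hT.1 i j).1 (by omega), aG_eq_tPos]
      simp only [Fin.val_succ]
      congr 1; omega
    · rw [(hT.1 i j).2 (by omega), cG_eq_tPos]
      simp only [Fin.val_zero, Fin.val_succ]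
      congr 1 <;> omega
  · rw [← cG_eq_tPos huv.ne, hT.2, cG_eq_tPos]
    simp only [Fin.val_succ]
    congr 1 <;> omega

lemma IsDeltaPole.apply_tPos {k : ℕ} {D : dkmn m n →ₗ⁅ℚ⁆ dkmn (m + 1) n}
    (hD : IsDeltaPole m n k D) (hk : k ≤ m) {p q : ℕ} (h : IsGenPair m n p q) :
    D (tPos m n p q) = tSum (m + 1) n (cofaceImage k p) (cofaceImage k q) := by
  refine h.induction
    (P := fun p q => D (tPos m n p q) = tSum (m + 1) n (cofaceImage k p) (cofaceImage k q))
    (fun p q hpq => by rw [tPos_comm, hpq, tSum_comm]) (fun i j => ?_) (fun u v huv => ?_)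
  · rw [← aG_eq_tPos, cofaceImage_of_le (p := m + j) (by omega)]
    rcases lt_trichotomy ((i : ℕ) + 1) k with hik | hik | hik
    · rw [(hD.1 i j).1 hik, aG_eq_tPos, cofaceImage_of_lt hik, tSum_singleton]
      simp only [Fin.val_castSucc]
      congr 1; omega
    · rw [(hD.1 i j).2.1 hik, aG_eq_tPos, aG_eq_tPos, cofaceImage_of_eq hik,
        tSum_pair_singleton]
      simp only [Fin.val_castSucc, Fin.val_succ]
      congr 2 <;> omega
    · rw [(hD.1 i j).2.2 hik, aG_eq_tPos, cofaceImage_of_le (by omega), tSum_singleton]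
      simp only [Fin.val_succ]
      congr 1; omega
  · rw [← cG_eq_tPos huv.ne, hD.2, cG_eq_tPos, cofaceImage_of_le (by omega),
      cofaceImage_of_le (by omega), tSum_singleton]
    congr 1 <;> omega

lemma IsDeltaStrand.apply_tPos {κ : ℕ} {D : dkmn m n →ₗ⁅ℚ⁆ dkmn m (n + 1)}
    (hD : IsDeltaStrand m n κ D) (hκ : 1 ≤ κ) {p q : ℕ} (h : IsGenPair m n p q) :
    D (tPos m n p q) = tSum m (n + 1) (cofaceImage (m + κ) p) (cofaceImage (m + κ) q) := by
  refine h.induction (P := fun p q =>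
      D (tPos m n p q) = tSum m (n + 1) (cofaceImage (m + κ) p) (cofaceImage (m + κ) q))
    (fun p q hpq => by rw [tPos_comm, hpq, tSum_comm]) (fun i j => ?_) (fun u v huv => ?_)
  · rw [← aG_eq_tPos, cofaceImage_of_lt (p := i) (by omega)]
    rcases lt_trichotomy ((j : ℕ) + 1) κ with hjκ | hjκ | hjκ
    · rw [(hD.1 i j).1 hjκ, aG_eq_tPos, cofaceImage_of_lt (by omega), tSum_singleton]
      rfl
    · rw [(hD.1 i j).2.1 hjκ, aG_eq_tPos, aG_eq_tPos, cofaceImage_of_eq (by omega),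
        tSum_singleton_pair]
      simp only [Fin.val_castSucc, Fin.val_succ]
      congr 2
    · rw [(hD.1 i j).2.2 hjκ, aG_eq_tPos, cofaceImage_of_le (by omega), tSum_singleton]
      simp only [Fin.val_succ]
      congr 1
  · have huv' : (u : ℕ) < v := huv
    rw [← cG_eq_tPos huv.ne]
    rcases lt_trichotomy ((v : ℕ) + 1) κ with hvκ | hvκ | hvκ
    · rw [((hD.2 u v huv).1 hvκ), cG_eq_tPos, cofaceImage_of_lt (by omega),
        cofaceImage_of_lt (by omega), tSum_singleton]
      rfl
    · rw [((hD.2 u v huv).2.1 hvκ), cG_eq_tPos, cG_eq_tPos, cofaceImage_of_lt (by omega),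
        cofaceImage_of_eq (by omega), tSum_singleton_pair]
      simp only [Fin.val_castSucc, Fin.val_succ]
      congr 2
    rcases lt_trichotomy ((u : ℕ) + 1) κ with huκ | huκ | huκ
    · rw [((hD.2 u v huv).2.2.1 ⟨huκ, hvκ⟩), cG_eq_tPos, cofaceImage_of_lt (by omega),
        cofaceImage_of_le (by omega), tSum_singleton]
      simp only [Fin.val_castSucc, Fin.val_succ]
      congr 1
    · rw [((hD.2 u v huv).2.2.2.1 huκ), cG_eq_tPos, cG_eq_tPos, cofaceImage_of_eq (by omega),
        cofaceImage_of_le (by omega), tSum_pair_singleton]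
      simp only [Fin.val_castSucc, Fin.val_succ]
      congr 2
    · rw [((hD.2 u v huv).2.2.2.2 huκ), cG_eq_tPos, cofaceImage_of_le (by omega),
        cofaceImage_of_le (by omega), tSum_singleton]
      simp only [Fin.val_succ]
      congr 1

lemma IsGenPair.of_mem_cofaceImage {k p q p' q' : ℕ} (h : IsGenPair m n p q)
    (hp : p' ∈ cofaceImage k p) (hq : q' ∈ cofaceImage k q) :
    IsGenPair m (n + 1) p' q' := by
  rw [mem_cofaceImage] at hp hq
  unfold IsGenPair at h ⊢
  omega

lemma IsGenPair.of_mem_cofaceImage_of_le {k p q p' q' : ℕ} (h : IsGenPair m n p q)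
    (hk : k ≤ m) (hp : p' ∈ cofaceImage k p) (hq : q' ∈ cofaceImage k q) :
    IsGenPair (m + 1) n p' q' := by
  rw [mem_cofaceImage] at hp hq
  unfold IsGenPair at h ⊢
  omega

lemma cofaceImage_pairwiseDisjoint (k : ℕ) (s : Set ℕ) :
    s.PairwiseDisjoint (cofaceImage k) := by
  intro a _ b _ hab
  rw [Function.onFun, disjoint_left]
  intro r ha hb
  rw [mem_cofaceImage] at ha hb
  omega

lemma exists_mem_cofaceImage {k p : ℕ} {P : ℕ → Prop} :
    (∃ r ∈ cofaceImage k p, P r) ↔ (p < k ∧ P p) ∨ (k ≤ p + 1 ∧ P (p + 1)) := by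
  simp only [mem_cofaceImage]
  constructor
  · rintro ⟨r, ⟨rfl, h⟩ | ⟨rfl, h⟩, hr⟩
    exacts [Or.inl ⟨h, hr⟩, Or.inr ⟨h, hr⟩]
  · rintro (⟨h, hr⟩ | ⟨h, hr⟩)
    exacts [⟨p, Or.inl ⟨rfl, h⟩, hr⟩, ⟨p + 1, Or.inr ⟨rfl, h⟩, hr⟩]

/-- The cosimplicial identity `d_i d_j = d_{j+1} d_i` at the level of positions. -/
lemma biUnion_cofaceImage_comm {i j : ℕ} (hij : i ≤ j) (p : ℕ) :
    (cofaceImage j p).biUnion (cofaceImage i) =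
      (cofaceImage i p).biUnion (cofaceImage (j + 1)) := by
  ext r
  simp only [mem_biUnion, exists_mem_cofaceImage]
  simp only [mem_cofaceImage]
  omega

lemma tSum_biUnion_cofaceImage (k : ℕ) (A B : Finset ℕ) :
    tSum m n (A.biUnion (cofaceImage k)) (B.biUnion (cofaceImage k)) =
      ∑ p ∈ A, ∑ q ∈ B, tSum m n (cofaceImage k p) (cofaceImage k q) := by
  simp only [tSum, sum_biUnion (cofaceImage_pairwiseDisjoint k _)]
  exact sum_congr rfl fun p _ => sum_comm

/-- The hypotheses under which `coface m n Dp Ds T k` is the coface map `d_k` of the paper. -/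
structure IsCofaceData (Dp : ℕ → (dkmn m n →ₗ⁅ℚ⁆ dkmn (m + 1) n))
    (Ds : ℕ → (dkmn m n →ₗ⁅ℚ⁆ dkmn m (n + 1))) (T : dkmn (m + 1) n →ₗ⁅ℚ⁆ dkmn m (n + 1)) :
    Prop where
  pole : ∀ k, k ≤ m → IsDeltaPole m n k (Dp k)
  strand : ∀ κ, 1 ≤ κ → κ ≤ n + 1 → IsDeltaStrand m n κ (Ds κ)
  theta : IsTheta m n T

namespace IsCofaceData

variable {Dp : ℕ → (dkmn m n →ₗ⁅ℚ⁆ dkmn (m + 1) n)} {Ds : ℕ → (dkmn m n →ₗ⁅ℚ⁆ dkmn m (n + 1))}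
  {T : dkmn (m + 1) n →ₗ⁅ℚ⁆ dkmn m (n + 1)}

lemma coface_apply_tPos (hd : IsCofaceData Dp Ds T) {k p q : ℕ} (hk : k ≤ m + n + 1)
    (h : IsGenPair m n p q) :
    coface m n Dp Ds T k (tPos m n p q) = tSum m (n + 1) (cofaceImage k p) (cofaceImage k q) := by
  unfold coface
  split_ifs with hkm
  · rw [LieHom.comp_apply, IsDeltaPole.apply_tPos (hd.pole k hkm) hkm h, tSum, tSum, map_sum]
    refine sum_congr rfl fun p' hp' => ?_
    rw [map_sum]
    exact sum_congr rfl fun q' hq' =>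
      IsTheta.apply_tPos hd.theta (h.of_mem_cofaceImage_of_le hkm hp' hq')
  · rw [IsDeltaStrand.apply_tPos (hd.strand (k - m) (by omega) (by omega)) (by omega) h,
      Nat.add_sub_cancel' (by omega)]

lemma coface_apply_tSum (hd : IsCofaceData Dp Ds T) {k : ℕ} (hk : k ≤ m + n + 1)
    {A B : Finset ℕ} (hAB : ∀ p ∈ A, ∀ q ∈ B, IsGenPair m n p q) :
    coface m n Dp Ds T k (tSum m n A B) =
      tSum m (n + 1) (A.biUnion (cofaceImage k)) (B.biUnion (cofaceImage k)) := by
  rw [tSum_biUnion_cofaceImage, tSum, map_sum]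
  refine sum_congr rfl fun p hp => ?_
  rw [map_sum]
  exact sum_congr rfl fun q hq => hd.coface_apply_tPos hk (hAB p hp q hq)

end IsCofaceData

theorem coface_comp_coface {Dp : ℕ → (dkmn m n →ₗ⁅ℚ⁆ dkmn (m + 1) n)}
    {Ds : ℕ → (dkmn m n →ₗ⁅ℚ⁆ dkmn m (n + 1))} {T : dkmn (m + 1) n →ₗ⁅ℚ⁆ dkmn m (n + 1)}
    {Dp' : ℕ → (dkmn m (n + 1) →ₗ⁅ℚ⁆ dkmn (m + 1) (n + 1))}
    {Ds' : ℕ → (dkmn m (n + 1) →ₗ⁅ℚ⁆ dkmn m (n + 2))}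
    {T' : dkmn (m + 1) (n + 1) →ₗ⁅ℚ⁆ dkmn m (n + 2)}
    (hd : IsCofaceData Dp Ds T) (hd' : IsCofaceData Dp' Ds' T') {i j : ℕ} (hij : i ≤ j)
    (hj : j ≤ m + n + 1) :
    (coface m (n + 1) Dp' Ds' T' i).comp (coface m n Dp Ds T j) =
      (coface m (n + 1) Dp' Ds' T' (j + 1)).comp (coface m n Dp Ds T i) := by
  refine dkmn_hom_ext fun p q h => ?_
  have hi : i ≤ m + n + 1 := hij.trans hj
  simp only [LieHom.comp_apply]
  rw [hd.coface_apply_tPos hj h, hd.coface_apply_tPos hi h,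
    hd'.coface_apply_tSum (by omega) fun p' hp' q' hq' => h.of_mem_cofaceImage hp' hq',
    hd'.coface_apply_tSum (by omega) fun p' hp' q' hq' => h.of_mem_cofaceImage hp' hq',
    biUnion_cofaceImage_comm hij, biUnion_cofaceImage_comm hij]

end DKCoface

/-- the cosimplicial identities for the coface maps, and `d ∘ d = 0`. -/
theorem statement5 (m n : ℕ)
    (Dp : ℕ → (dkmn m n →ₗ⁅ℚ⁆ dkmn (m + 1) n))
    (hDp : ∀ k, k ≤ m → IsDeltaPole m n k (Dp k))
    (Ds : ℕ → (dkmn m n →ₗ⁅ℚ⁆ dkmn m (n + 1)))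
    (hDs : ∀ κ, 1 ≤ κ → κ ≤ n + 1 → IsDeltaStrand m n κ (Ds κ))
    (T : dkmn (m + 1) n →ₗ⁅ℚ⁆ dkmn m (n + 1)) (hT : IsTheta m n T)
    (Dp' : ℕ → (dkmn m (n + 1) →ₗ⁅ℚ⁆ dkmn (m + 1) (n + 1)))
    (hDp' : ∀ k, k ≤ m → IsDeltaPole m (n + 1) k (Dp' k))
    (Ds' : ℕ → (dkmn m (n + 1) →ₗ⁅ℚ⁆ dkmn m (n + 2)))
    (hDs' : ∀ κ, 1 ≤ κ → κ ≤ n + 2 → IsDeltaStrand m (n + 1) κ (Ds' κ))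
    (T' : dkmn (m + 1) (n + 1) →ₗ⁅ℚ⁆ dkmn m (n + 2)) (hT' : IsTheta m (n + 1) T') :
    (∀ i j : ℕ, i ≤ j → j ≤ m + n + 1 →
      (coface m (n + 1) Dp' Ds' T' i).comp (coface m n Dp Ds T j) =
        (coface m (n + 1) Dp' Ds' T' (j + 1)).comp (coface m n Dp Ds T i)) ∧
    ((∑ k ∈ Finset.range (m + n + 3),
        ((-1 : ℚ) ^ k) • (coface m (n + 1) Dp' Ds' T' k).toLinearMap) ∘ₗ
      (∑ k ∈ Finset.range (m + n + 2),
        ((-1 : ℚ) ^ k) • (coface m n Dp Ds T k).toLinearMap) = 0) := by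
  have cosimplicial : ∀ i j : ℕ, i ≤ j → j ≤ m + n + 1 →
      (coface m (n + 1) Dp' Ds' T' i).comp (coface m n Dp Ds T j) =
        (coface m (n + 1) Dp' Ds' T' (j + 1)).comp (coface m n Dp Ds T i) := fun i j hij hj =>
    DKCoface.coface_comp_coface ⟨hDp, hDs, hT⟩ ⟨hDp', hDs', hT'⟩ hij hj
  exact ⟨cosimplicial, LinearMap.alternating_sum_comp_alternating_sum_eq_zero (m + n + 1)
    (fun k => (coface m n Dp Ds T k).toLinearMap)
    (fun k => (coface m (n + 1) Dp' Ds' T' k).toLinearMap)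
    fun i j hij hj => congrArg LieHom.toLinearMap (cosimplicial i j hij hj)⟩

end
end

section
/- Let m ≥ 0, n ≥ 0 and let u, v ∈ lie_m. For every 1 ≤ j ≤ n, [u_j, v_j] = ([u,v])_j in edk_{m,n}; and for every 1 ≤ j < k ≤ n, [u_j, v_k] = (Σ_{i=1}^m (∂_i v)·x_i·ι(∂_i u))_{jk} in edk_{m,n}. -/
noncomputable section

open scoped TensorProduct

attribute [local instance 100] LieRing.ofAssociativeRing

/-!
The 4T relations give, in `edk_{m,n}`, `⁅a_{pj}, c_{jk}⁆ = -⁅a_{pk}, c_{jk}⁆` and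
`⁅a_{pj}, a_{pk}⁆ = ⁅a_{pk}, c_{jk}⁆`, while `a_{pj}` and `a_{qk}` commute for `p ≠ q`. Since
moreover `c` becomes abelian, bracketing `w_{jk}` with `u_j` amounts to right multiplication of
`w` by `ι(u)`, and bracketing with `v_k` to left multiplication by `v`. Starting from
`⁅a_{pj}, a_{qk}⁆ = δ_{pq} (x_p)_{jk}`, the formula for `⁅u_j, v_k⁆` then follows by induction on
`u` and `v`, using `∂ᵢ⁅a, b⁆ = a ∂ᵢb - b ∂ᵢa` for Lie elements. The first identity only says
that `u ↦ u_j` is a Lie algebra map.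
-/

section Words

variable {N : ℕ}

lemma wordProd_cons (a : Fin N) (t : List (Fin N)) :
    wordProd (a :: t) = gen a * wordProd t := by
  simp [wordProd]

lemma wordProd_append (l r : List (Fin N)) :
    wordProd (l ++ r) = wordProd l * wordProd r := by
  simp [wordProd]

lemma wordProd_singleton (a : Fin N) : wordProd [a] = gen a := by
  simp [wordProd]

lemma equivMonoidAlgebraFreeMonoid_wordProd (l : List (Fin N)) :
    FreeAlgebra.equivMonoidAlgebraFreeMonoid (wordProd l)
      = MonoidAlgebra.single (FreeMonoid.ofList l) (1 : ℚ) := by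
  induction l with
  | nil => simp [wordProd, MonoidAlgebra.one_def]
  | cons a t ih =>
    have hgen : FreeAlgebra.equivMonoidAlgebraFreeMonoid (gen a)
        = MonoidAlgebra.single (FreeMonoid.of a) (1 : ℚ) := by
      simp [gen, FreeAlgebra.equivMonoidAlgebraFreeMonoid, MonoidAlgebra.of_apply]
    rw [wordProd_cons, map_mul, ih, hgen, MonoidAlgebra.single_mul_single, one_mul]
    rfl

lemma basisFreeMonoid_ofList (l : List (Fin N)) :
    FreeAlgebra.basisFreeMonoid ℚ (Fin N) (FreeMonoid.ofList l) = wordProd l := by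
  rw [FreeAlgebra.basisFreeMonoid, Module.Basis.map_apply, LinearEquiv.symm_apply_eq]
  simp [equivMonoidAlgebraFreeMonoid_wordProd, Finsupp.basisSingleOne]

lemma liftWord_wordProd {A : Type} [AddCommGroup A] [Module ℚ A]
    (f : List (Fin N) → A) (l : List (Fin N)) : liftWord f (wordProd l) = f l := by
  rw [liftWord, ← basisFreeMonoid_ofList, Module.Basis.constr_basis]
  rfl

lemma wordProd_induction {P : Ass N → Prop} (word : ∀ l, P (wordProd l)) (zero : P 0)
    (add : ∀ x y, P x → P y → P (x + y)) (smul : ∀ (c : ℚ) x, P x → P (c • x)) (a : Ass N) :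
    P a := by
  have ha : a ∈ Submodule.span ℚ (Set.range (FreeAlgebra.basisFreeMonoid ℚ (Fin N))) := by
    rw [Module.Basis.span_eq]; trivial
  refine Submodule.span_induction ?_ zero (fun x y _ _ => add x y) (fun c x _ => smul c x) ha
  rintro _ ⟨w, rfl⟩
  simpa [← basisFreeMonoid_ofList] using word w.toList

end Words

section Antipode

variable {N : ℕ}

lemma iotaMap_wordProd (l : List (Fin N)) :
    iotaMap N (wordProd l) = ((-1 : ℚ) ^ l.length) • wordProd l.reverse :=
  liftWord_wordProd _ l

lemma iotaMap_one : iotaMap N 1 = 1 := by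
  simpa [wordProd] using iotaMap_wordProd (N := N) []

lemma iotaMap_gen (p : Fin N) : iotaMap N (gen p) = -gen p := by
  simpa [wordProd_singleton] using iotaMap_wordProd [p]

lemma iotaMap_mul (a b : Ass N) : iotaMap N (a * b) = iotaMap N b * iotaMap N a := by
  induction a using wordProd_induction with
  | word l =>
    induction b using wordProd_induction with
    | word r =>
      rw [← wordProd_append, iotaMap_wordProd, iotaMap_wordProd, iotaMap_wordProd,
        List.reverse_append, wordProd_append, List.length_append, pow_add,
        smul_mul_smul_comm, mul_comm ((-1 : ℚ) ^ r.length)]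
    | zero => simp
    | add x y hx hy => rw [mul_add, map_add, hx, hy, map_add, add_mul]
    | smul c x hx => rw [mul_smul_comm, map_smul, hx, map_smul, smul_mul_assoc]
  | zero => simp
  | add x y hx hy => rw [add_mul, map_add, hx, hy, map_add, mul_add]
  | smul c x hx => rw [smul_mul_assoc, map_smul, hx, map_smul, mul_smul_comm]

end Antipode

section PartialDerivatives

variable {N : ℕ}

lemma partialD_mul_gen (i p : Fin N) (a : Ass N) :
    partialD i (a * gen p) = if p = i then a else 0 := by
  induction a using wordProd_induction with
  | word l =>
    rw [← wordProd_singleton, ← wordProd_append, partialD, liftWord_wordProd]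
    simp
  | zero => simp
  | add x y hx hy => rw [add_mul, map_add, hx, hy]; split <;> simp
  | smul c x hx => rw [smul_mul_assoc, map_smul, hx]; split <;> simp

lemma partialD_gen (i p : Fin N) : partialD i (gen p) = if p = i then 1 else 0 := by
  simpa using partialD_mul_gen i p 1

-- `hv` says that `v` has no constant term.
lemma partialD_mul_of_eq_sum (i : Fin N) (a : Ass N) {v : Ass N}
    (hv : v = ∑ j, partialD j v * gen j) :
    partialD i (a * v) = a * partialD i v := by
  conv_lhs => rw [hv]
  simp_rw [Finset.mul_sum, map_sum, ← mul_assoc, partialD_mul_gen]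
  simp

end PartialDerivatives

namespace FreeLieAlgebra

variable {R X : Type*} [CommRing R]

lemma induction {P : FreeLieAlgebra R X → Prop} (of : ∀ x, P (of R x)) (zero : P 0)
    (smul : ∀ (c : R) x, P x → P (c • x)) (add : ∀ x y, P x → P y → P (x + y))
    (lie : ∀ x y, P x → P y → P ⁅x, y⁆) (a : FreeLieAlgebra R X) : P a := by
  let S := LieSubalgebra.lieSpan R (FreeLieAlgebra R X) (Set.range (FreeLieAlgebra.of R))
  let g : FreeLieAlgebra R X →ₗ⁅R⁆ S :=
    lift R fun x => ⟨FreeLieAlgebra.of R x, LieSubalgebra.subset_lieSpan ⟨x, rfl⟩⟩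
  have hg : S.incl.comp g = LieHom.id := hom_ext fun x => by simp [g]
  have ha : a ∈ S := by
    rw [← LieHom.id_apply (R := R) a, ← hg]
    exact (g a).2
  exact LieSubalgebra.lieSpan_induction (R := R) (p := fun x _ => P x) (by rintro _ ⟨x, rfl⟩; exact of x)
    zero (fun x y _ _ => add x y) (fun c x _ => smul c x) (fun x y _ _ => lie x y) ha

end FreeLieAlgebra

section LieElements

variable {m : ℕ}

lemma toAssL_of (p : Fin m) : toAssL m (FreeLieAlgebra.of ℚ p) = gen p :=
  FreeLieAlgebra.lift_of_apply _ p

lemma toAssL_eq_sum_partialD_mul_gen (U : FreeLieAlgebra ℚ (Fin m)) :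
    toAssL m U = ∑ i, partialD i (toAssL m U) * gen i := by
  induction U using FreeLieAlgebra.induction with
  | of p => simp [toAssL_of, partialD_gen, ite_mul]
  | zero => simp
  | smul c x hx => simp only [map_smul, smul_mul_assoc, ← Finset.smul_sum, ← hx]
  | add x y hx hy =>
    simp only [map_add, add_mul, Finset.sum_add_distrib]
    rw [← hx, ← hy]
  | lie x y hx hy =>
    simp only [LieHom.map_lie, Ring.lie_def, map_sub, sub_mul, Finset.sum_sub_distrib,
      partialD_mul_of_eq_sum _ _ hx, partialD_mul_of_eq_sum _ _ hy, mul_assoc, ← Finset.mul_sum]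
    rw [← hx, ← hy]

lemma partialD_toAssL_lie (i : Fin m) (U V : FreeLieAlgebra ℚ (Fin m)) :
    partialD i (toAssL m ⁅U, V⁆)
      = toAssL m U * partialD i (toAssL m V) - toAssL m V * partialD i (toAssL m U) := by
  rw [LieHom.map_lie, Ring.lie_def, map_sub,
    partialD_mul_of_eq_sum i _ (toAssL_eq_sum_partialD_mul_gen V),
    partialD_mul_of_eq_sum i _ (toAssL_eq_sum_partialD_mul_gen U)]

end LieElements

section MixedRelations

variable {m n : ℕ}

lemma mk_eq_zero_of_mem_mixRels {z : FLmix m n} (hz : z ∈ mixRels m n) :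
    (LieSubmodule.Quotient.mk z : dkmn m n) = 0 :=
  LieSubmodule.Quotient.mk_eq_zero'.2 (LieSubmodule.subset_lieSpan hz)

lemma mk_tMix_comm (P Q : Fin (m + n)) (h : P ≠ Q) (hm : m ≤ (P : ℕ) ∨ m ≤ (Q : ℕ)) :
    (LieSubmodule.Quotient.mk (tMix P Q h hm) : dkmn m n)
      = LieSubmodule.Quotient.mk (tMix Q P h.symm hm.symm) :=
  sub_eq_zero.1 (mk_eq_zero_of_mem_mixRels (Or.inl (Or.inl ⟨P, Q, h, hm, rfl⟩)))

lemma lie_aG_add_cG_aG (p : Fin m) {j k : Fin n} (hjk : j ≠ k) :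
    ⁅aG p j + cG j k hjk, aG p k⁆ = (0 : dkmn m n) :=
  mk_eq_zero_of_mem_mixRels (Or.inr ⟨_, _, _, _, _, _, _, _, _, rfl⟩)

lemma lie_aG_add_aG_cG (p : Fin m) {j k : Fin n} (hjk : j ≠ k) :
    ⁅aG p j + aG p k, cG j k hjk⁆ = (0 : dkmn m n) := by
  rw [aG, mk_tMix_comm]
  exact mk_eq_zero_of_mem_mixRels (Or.inr ⟨_, _, _, _, _, _, _, _, _, rfl⟩)

lemma lie_aG_aG_of_ne {p q : Fin m} (hpq : p ≠ q) {j k : Fin n} (hjk : j ≠ k) :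
    ⁅aG p j, aG q k⁆ = (0 : dkmn m n) :=
  mk_eq_zero_of_mem_mixRels (Or.inl (Or.inr ⟨_, _, _, _, _, _, _, _,
    fun h => hpq (Fin.castAdd_injective _ _ h), castAdd_ne_natAdd p k,
    (castAdd_ne_natAdd q j).symm, natAdd_ne hjk, rfl⟩))

lemma lie_aGE_aGE_of_ne {p q : Fin m} (hpq : p ≠ q) {j k : Fin n} (hjk : j ≠ k) :
    ⁅aGE p j, aGE q k⁆ = (0 : edk m n) :=
  congrArg (eprojF m n) (lie_aG_aG_of_ne hpq hjk)

lemma lie_aGE_cGE (p : Fin m) {j k : Fin n} (hjk : j ≠ k) :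
    ⁅aGE p j, cGE j k hjk⁆ = -⁅aGE p k, (cGE j k hjk : edk m n)⁆ := by
  have h : ⁅aGE p j + aGE p k, (cGE j k hjk : edk m n)⁆ = 0 :=
    congrArg (eprojF m n) (lie_aG_add_aG_cG p hjk)
  rw [add_lie] at h
  exact eq_neg_of_add_eq_zero_left h

lemma lie_aGE_aGE (p : Fin m) {j k : Fin n} (hjk : j ≠ k) :
    ⁅aGE p j, aGE p k⁆ = ⁅aGE p k, (cGE j k hjk : edk m n)⁆ := by
  have h : ⁅aGE p j + cGE j k hjk, (aGE p k : edk m n)⁆ = 0 :=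
    congrArg (eprojF m n) (lie_aG_add_cG_aG p hjk)
  rw [add_lie] at h
  rw [eq_neg_of_add_eq_zero_left h, lie_skew]

lemma lie_eprojF_eq_zero {x y : dkmn m n} (hx : x ∈ cId m n) (hy : y ∈ cId m n) :
    ⁅eprojF m n x, eprojF m n y⁆ = 0 :=
  LieSubmodule.Quotient.mk_eq_zero'.2 (LieSubmodule.lie_mem_lie hx hy)

lemma exists_adWApply_cGE_eq_eprojF {j k : Fin n} (hjk : j ≠ k) (l : List (Fin m)) :
    ∃ ξ ∈ cId m n, adWApply k l (cGE j k hjk) = eprojF m n ξ := by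
  induction l with
  | nil => exact ⟨cG j k hjk, LieSubmodule.subset_lieSpan ⟨j, k, hjk, rfl⟩, rfl⟩
  | cons p t ih =>
    obtain ⟨ξ, hξ, h⟩ := ih
    exact ⟨⁅aG p k, ξ⁆, (cId m n).lie_mem hξ, by rw [adWApply, h]; rfl⟩

end MixedRelations

section Brackets

variable {m n : ℕ} {j k : Fin n}

lemma lie_aGE_adWApply_cGE (p : Fin m) (hjk : j ≠ k) (l : List (Fin m)) :
    ⁅aGE p j, adWApply k l (cGE j k hjk)⁆ = -adWApply k (l ++ [p]) (cGE j k hjk) := by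
  induction l with
  | nil => exact lie_aGE_cGE p hjk
  | cons q t ih =>
    have hcomm : ⁅⁅aGE p j, aGE q k⁆, adWApply k t (cGE j k hjk)⁆ = 0 := by
      -- for `p = q` both entries lie in the image of `c`, which is abelian in `edk_{m,n}`
      obtain rfl | hpq := eq_or_ne p q
      · obtain ⟨ξ, hξ, hξeq⟩ := exists_adWApply_cGE_eq_eprojF hjk t
        rw [lie_aGE_aGE p hjk, hξeq]
        exact lie_eprojF_eq_zero ((cId m n).lie_mem (LieSubmodule.subset_lieSpan ⟨j, k, hjk, rfl⟩)) hξ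
      · rw [lie_aGE_aGE_of_ne hpq hjk, zero_lie]
    rw [adWApply, leibniz_lie, hcomm, zero_add, ih, lie_neg]
    rfl

lemma wEl_wordProd (hjk : j ≠ k) (l : List (Fin m)) :
    wEl j k hjk (wordProd l) = adWApply k l (cGE j k hjk) :=
  liftWord_wordProd _ l

lemma lie_aGE_wEl_left (p : Fin m) (hjk : j ≠ k) (w : Ass m) :
    ⁅aGE p j, wEl j k hjk w⁆ = -wEl j k hjk (w * gen p) := by
  induction w using wordProd_induction with
  | word l =>
    rw [← wordProd_singleton, ← wordProd_append, wEl_wordProd, wEl_wordProd]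
    exact lie_aGE_adWApply_cGE p hjk l
  | zero => simp
  | add x y hx hy => rw [map_add, lie_add, hx, hy, add_mul, map_add, neg_add]
  | smul c x hx => rw [map_smul, lie_smul, hx, smul_mul_assoc, map_smul, smul_neg]

lemma lie_aGE_wEl_right (p : Fin m) (hjk : j ≠ k) (w : Ass m) :
    ⁅aGE p k, wEl j k hjk w⁆ = wEl j k hjk (gen p * w) := by
  induction w using wordProd_induction with
  | word l =>
    rw [← wordProd_cons, wEl_wordProd, wEl_wordProd]
    rfl
  | zero => simp
  | add x y hx hy => rw [map_add, lie_add, hx, hy, mul_add, map_add]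
  | smul c x hx => rw [map_smul, lie_smul, hx, mul_smul_comm, map_smul]

lemma uEl_of (i : Fin n) (p : Fin m) : uEl i (FreeLieAlgebra.of ℚ p) = aGE p i :=
  FreeLieAlgebra.lift_of_apply _ p

lemma lie_uEl_wEl_left (hjk : j ≠ k) (U : FreeLieAlgebra ℚ (Fin m)) (w : Ass m) :
    ⁅uEl j U, wEl j k hjk w⁆ = wEl j k hjk (w * iotaMap m (toAssL m U)) := by
  induction U using FreeLieAlgebra.induction generalizing w with
  | of p => rw [uEl_of, toAssL_of, iotaMap_gen, mul_neg, map_neg, lie_aGE_wEl_left]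
  | zero => simp
  | smul c x hx => rw [map_smul, smul_lie, hx, map_smul, map_smul, mul_smul_comm, map_smul]
  | add x y hx hy => rw [map_add, add_lie, hx, hy, map_add, map_add, mul_add, map_add]
  | lie x y hx hy =>
    rw [LieHom.map_lie, lie_lie, hx, hy, hx, hy, LieHom.map_lie, Ring.lie_def, map_sub,
      iotaMap_mul, iotaMap_mul, mul_sub, map_sub, mul_assoc, mul_assoc]

lemma lie_uEl_wEl_right (hjk : j ≠ k) (V : FreeLieAlgebra ℚ (Fin m)) (w : Ass m) :
    ⁅uEl k V, wEl j k hjk w⁆ = wEl j k hjk (toAssL m V * w) := by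
  induction V using FreeLieAlgebra.induction generalizing w with
  | of p => rw [uEl_of, toAssL_of, lie_aGE_wEl_right]
  | zero => simp
  | smul c x hx => rw [map_smul, smul_lie, hx, map_smul, smul_mul_assoc, map_smul]
  | add x y hx hy => rw [map_add, add_lie, hx, hy, map_add, add_mul, map_add]
  | lie x y hx hy =>
    rw [LieHom.map_lie, lie_lie, hx, hy, hx, hy, LieHom.map_lie, Ring.lie_def, sub_mul, map_sub,
      mul_assoc, mul_assoc]

end Brackets

section MixedBracket

variable {m n : ℕ}

/-- The element `w` with `⁅u_j, v_k⁆ = w_{jk}`. -/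
def mixedBracket (u v : Ass m) : Ass m := ∑ i, partialD i v * gen i * iotaMap m (partialD i u)

lemma mixedBracket_gen_gen (p q : Fin m) :
    mixedBracket (gen p) (gen q) = if p = q then gen p else 0 := by
  obtain rfl | hpq := eq_or_ne p q <;>
    simp_all [mixedBracket, partialD_gen, ite_mul, iotaMap_one]

lemma mixedBracket_lie_left (U₁ U₂ V : FreeLieAlgebra ℚ (Fin m)) :
    mixedBracket (toAssL m ⁅U₁, U₂⁆) (toAssL m V)
      = mixedBracket (toAssL m U₂) (toAssL m V) * iotaMap m (toAssL m U₁)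
        - mixedBracket (toAssL m U₁) (toAssL m V) * iotaMap m (toAssL m U₂) := by
  simp only [mixedBracket, Finset.sum_mul, ← Finset.sum_sub_distrib, partialD_toAssL_lie,
    map_sub, iotaMap_mul, mul_sub, mul_assoc]

lemma mixedBracket_lie_right (U V₁ V₂ : FreeLieAlgebra ℚ (Fin m)) :
    mixedBracket (toAssL m U) (toAssL m ⁅V₁, V₂⁆)
      = toAssL m V₁ * mixedBracket (toAssL m U) (toAssL m V₂)
        - toAssL m V₂ * mixedBracket (toAssL m U) (toAssL m V₁) := by
  simp only [mixedBracket, Finset.mul_sum, ← Finset.sum_sub_distrib, partialD_toAssL_lie,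
    sub_mul, mul_assoc]

lemma lie_aGE_aGE_eq_wEl (p q : Fin m) {j k : Fin n} (hjk : j ≠ k) :
    ⁅aGE p j, aGE q k⁆ = wEl j k hjk (mixedBracket (gen p) (gen q)) := by
  rw [mixedBracket_gen_gen]
  obtain rfl | hpq := eq_or_ne p q
  · rw [if_pos rfl, ← wordProd_singleton, wEl_wordProd, lie_aGE_aGE p hjk]
    rfl
  · rw [if_neg hpq, map_zero, lie_aGE_aGE_of_ne hpq hjk]

lemma lie_uEl_aGE {j k : Fin n} (hjk : j ≠ k) (U : FreeLieAlgebra ℚ (Fin m)) (q : Fin m) :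
    ⁅uEl j U, aGE q k⁆ = wEl j k hjk (mixedBracket (toAssL m U) (gen q)) := by
  induction U using FreeLieAlgebra.induction with
  | of p => rw [uEl_of, toAssL_of, lie_aGE_aGE_eq_wEl p q hjk]
  | zero => simp [mixedBracket]
  | smul c x hx =>
    simp only [map_smul, smul_lie, hx, mixedBracket, mul_smul_comm, ← Finset.smul_sum]
  | add x y hx hy =>
    simp only [map_add, add_lie, hx, hy, mixedBracket, mul_add, Finset.sum_add_distrib]
  | lie x y hx hy =>
    rw [LieHom.map_lie, lie_lie, hx, hy, lie_uEl_wEl_left, lie_uEl_wEl_left, ← map_sub,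
      ← toAssL_of q, mixedBracket_lie_left]

lemma lie_uEl_uEl_of_ne {j k : Fin n} (hjk : j ≠ k) (U V : FreeLieAlgebra ℚ (Fin m)) :
    ⁅uEl j U, uEl k V⁆ = wEl j k hjk (mixedBracket (toAssL m U) (toAssL m V)) := by
  induction V using FreeLieAlgebra.induction with
  | of q => rw [uEl_of, toAssL_of, lie_uEl_aGE hjk]
  | zero => simp [mixedBracket]
  | smul c x hx =>
    simp only [map_smul, lie_smul, hx, mixedBracket, smul_mul_assoc, ← Finset.smul_sum]
  | add x y hx hy =>
    simp only [map_add, lie_add, hx, hy, mixedBracket, add_mul, Finset.sum_add_distrib]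
  | lie x y hx hy =>
    rw [LieHom.map_lie, leibniz_lie, hx, hy, ← lie_skew (wEl j k hjk _) (uEl k y),
      lie_uEl_wEl_right, lie_uEl_wEl_right, mixedBracket_lie_right, map_sub]
    abel

end MixedBracket

/-- brackets `[u_j, v_j] = [u,v]_j` and
`[u_j, v_k] = (Σ_i (∂_i v)·x_i·ι(∂_i u))_{jk}` in `edk_{m,n}`. -/
theorem statement7 (m n : ℕ) (U V : FreeLieAlgebra ℚ (Fin m)) (u v : Ass m)
    (hU : toAssL m U = u) (hV : toAssL m V = v) :
    (∀ j : Fin n, ⁅uEl j U, uEl j V⁆ = uEl j ⁅U, V⁆) ∧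
    (∀ (j k : Fin n) (h : j < k),
      ⁅uEl j U, uEl k V⁆ =
        wEl j k h.ne (∑ i, partialD i v * gen i * iotaMap m (partialD i u))) := by
  subst hU hV
  exact ⟨fun j => ((uEl j).map_lie U V).symm, fun j k h => lie_uEl_uEl_of_ne h.ne U V⟩

end
end
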